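/- The flow functions of the pointer load statement x = *y are monotonic with respect to the analysis order (reverse inclusion on both components): defining f_L(l, a) = (l \ {x}) ∪ Ref(l, a) and f_A(l, a) = ((a \ ({x} × V)) ∪ ({x} × Pointee(a)))|l, for all liveness sets l1, l2 ⊆ P with l1 ⊇ l2 and points-to relations a1, a2 ⊆ P × V with a1 ⊇ a2, one has f_L(l1, a1) ⊇ f_L(l2, a2) and f_A(l1, a1) ⊇ f_A(l2, a2). -/
import Mathlib


/-- Relation application: `R X = {v | ∃ u ∈ X, (u,v) ∈ R}`. -/
def app {V : Type*} (R : Set (V × V)) (X : Set V) : Set V :=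
  {v | ∃ u ∈ X, (u, v) ∈ R}

/-- Relation restriction: `R|X = {(u,v) ∈ R | u ∈ X}`. -/
def restrict {V : Type*} (R : Set (V × V)) (X : Set V) : Set (V × V) :=
  {p ∈ R | p.1 ∈ X}

/-- Hat-composition: `R ∘̂ R = {(u,w) | ∃ v ∈ P, (u,v) ∈ R ∧ (v,w) ∈ R}`. -/
def hatComp {V : Type*} (P : Set V) (R : Set (V × V)) : Set (V × V) :=
  {p | ∃ v ∈ P, (p.1, v) ∈ R ∧ (v, p.2) ∈ R}

/-- Pointee extractor for the pointer load `x = *y`: `Pointee(a) = (a ∘̂ a){y}`. -/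
def Pointee {V : Type*} (P : Set V) (y : V) (a : Set (V × V)) : Set V :=
  app (hatComp P a) {y}

open Classical in
/-- Ref extractor for the pointer load `x = *y`:
`Ref(l,a) = {y} ∪ ((a{y}) ∩ P)` if `x ∈ l`, and `Ref(l,a) = ∅` otherwise. -/
noncomputable def Ref {V : Type*} (P : Set V) (x y : V)
    (l : Set V) (a : Set (V × V)) : Set V :=
  if x ∈ l then {y} ∪ (app a {y} ∩ P) else ∅

/-- Liveness flow function of the pointer load `x = *y`:
`f_L(l, a) = (l \ {x}) ∪ Ref(l, a)`. -/
noncomputable def fL {V : Type*} (P : Set V) (x y : V)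
    (l : Set V) (a : Set (V × V)) : Set V :=
  (l \ {x}) ∪ Ref P x y l a

/-- May-points-to flow function of the pointer load `x = *y`:
`f_A(l, a) = ((a \ ({x} × V)) ∪ ({x} × Pointee(a)))|l`. -/
def fA {V : Type*} (P : Set V) (x y : V)
    (l : Set V) (a : Set (V × V)) : Set (V × V) :=
  restrict ((a \ (({x} : Set V) ×ˢ (Set.univ : Set V))) ∪
    (({x} : Set V) ×ˢ Pointee P y a)) l

/-- The flow functions of the pointer load statement `x = *y` are
monotonic with respect to the analysis order (reverse inclusion on both components):
for all liveness sets `l1, l2 ⊆ P` with `l1 ⊇ l2` and points-to relations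
`a1, a2 ⊆ P × V` with `a1 ⊇ a2`, one has `f_L(l1, a1) ⊇ f_L(l2, a2)` and
`f_A(l1, a1) ⊇ f_A(l2, a2)`. -/
theorem load_flow_functions_monotone {V : Type*}
    (P : Set V) (undef : V) (hundef : undef ∉ P)
    (x y : V) (hx : x ∈ P) (hy : y ∈ P)
    (l1 l2 : Set V) (hl1 : l1 ⊆ P) (hl2 : l2 ⊆ P) (hl : l2 ⊆ l1)
    (a1 a2 : Set (V × V))
    (ha1 : ∀ p ∈ a1, p.1 ∈ P) (ha2 : ∀ p ∈ a2, p.1 ∈ P)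
    (ha : a2 ⊆ a1) :
    fL P x y l2 a2 ⊆ fL P x y l1 a1 ∧ fA P x y l2 a2 ⊆ fA P x y l1 a1 := by
  constructor
  · intro v hv
    rcases hv with h | h
    · exact Or.inl ⟨hl h.1, h.2⟩
    · right
      unfold Ref at h ⊢
      by_cases hx2 : x ∈ l2
      · rw [if_pos hx2] at h
        rw [if_pos (hl hx2)]
        show _ ∈ {y} ∪ (app a1 {y} ∩ P)
        rcases h with h | h
        · exact Or.inl h
        · refine Or.inr ⟨?_, h.2⟩
          obtain ⟨u, hu, hua⟩ := h.1
          exact ⟨u, hu, ha hua⟩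
      · rw [if_neg hx2] at h; exact absurd h (Set.notMem_empty v)
  · intro p hp
    obtain ⟨hmem, hpl⟩ := hp
    refine ⟨?_, hl hpl⟩
    rcases hmem with h | h
    · exact Or.inl ⟨ha h.1, h.2⟩
    · refine Or.inr ⟨h.1, ?_⟩
      obtain ⟨u, hu, v, hvP, h1, h2⟩ := h.2
      exact ⟨u, hu, v, hvP, ha h1, ha h2⟩
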